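/- arXiv:1603.01568 — 4 statements merged into one kernel-verified Lean document; each statement's English description precedes it below -/
import Mathlib

section
/- Let R be a fusion ring (a ℤ-algebra free as a ℤ-module with distinguished basis {Xᵢ} containing 1, nonnegative structure constants, and with involution * such that the coefficient of 1 in XᵢXⱼ equals 1 if Xⱼ = Xᵢ* and 0 otherwise), and let FPdim : R → ℝ be the ring homomorphism sending each basis element to its Frobenius–Perron dimension (FPdim(Xᵢ) > 0 for all i). Let A and C be based subrings of R whose basis intersection is {1}. Then for basis elements X ∈ A and Y ∈ C, the product XY is again a basis element of R, and XY = X'Y' for basis elements X' ∈ A, Y' ∈ C implies X = X' and Y = Y'. -/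
open Finset

/-- A fusion ring presented by its structure constants on a finite basis. -/
structure FusionRingData (ι : Type*) [Fintype ι] [DecidableEq ι] where
  one : ι
  dual : ι → ι
  N : ι → ι → ι → ℕ
  assoc : ∀ i j k l, ∑ m : ι, N i j m * N m k l = ∑ m : ι, N j k m * N i m l
  one_mul : ∀ i j, N one i j = if j = i then 1 else 0
  mul_one : ∀ i j, N i one j = if j = i then 1 else 0
  dual_dual : ∀ i, dual (dual i) = i
  frob1 : ∀ i j k, N i j k = N (dual i) k j
  frob2 : ∀ i j k, N i j k = N k (dual j) i

/-- A based subring of a fusion ring: a subset of the basis containing the unit,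
closed under duality and under taking constituents of products. -/
structure BasedSubring {ι : Type*} [Fintype ι] [DecidableEq ι]
    (R : FusionRingData ι) where
  carrier : Finset ι
  one_mem : R.one ∈ carrier
  dual_mem : ∀ i ∈ carrier, R.dual i ∈ carrier
  mul_mem : ∀ i ∈ carrier, ∀ j ∈ carrier, ∀ k, R.N i j k ≠ 0 → k ∈ carrier

/-- `d` is the Frobenius–Perron dimension character: a ring homomorphism
on the Grothendieck ring, positive on basis elements. -/
def IsFPdim {ι : Type*} [Fintype ι] [DecidableEq ι]
    (R : FusionRingData ι) (d : ι → ℝ) : Prop :=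
  (∀ i, 0 < d i) ∧ ∀ i j, d i * d j = ∑ k : ι, (R.N i j k : ℝ) * d k

/-
Write `⟨x, y⟩ = ∑ₖ xₖ yₖ` for the standard inner product on the Grothendieck ring. For
`X, X' ∈ A` and `Y, Y' ∈ C`, Frobenius reciprocity and associativity give
`⟨XY, X'Y'⟩ = ⟨X'* X, Y' Y*⟩`. The left factor lies in `A`, the right one in `C`, so only the
unit can occur in both, with multiplicities `δ_{XX'}` and `δ_{YY'}`. Hence
`⟨XY, X'Y'⟩ = δ_{XX'} δ_{YY'}`: taking `X' = X`, `Y' = Y` shows that `XY` has norm `1`, so it is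
a basis element, and unless `(X, Y) = (X', Y')` the products `XY` and `X'Y'` share no
constituent.
-/

lemma Finset.exists_eq_ite_of_sum_mul_self_eq_one {ι : Type*} [Fintype ι] [DecidableEq ι]
    {f : ι → ℕ} (h : ∑ i, f i * f i = 1) : ∃ k, ∀ m, f m = if m = k then 1 else 0 := by
  obtain ⟨k, -, hk⟩ := exists_ne_zero_of_sum_ne_zero (h ▸ one_ne_zero)
  have hk : f k ≠ 0 := fun h0 => hk (by simp [h0])
  have hle : ∀ s : Finset ι, ∑ i ∈ s, f i * f i ≤ 1 := fun s =>
    h ▸ sum_le_sum_of_subset (subset_univ s)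
  refine ⟨k, fun m => ?_⟩
  split_ifs with hm
  · subst hm
    have := hle {m}
    rw [sum_singleton] at this
    nlinarith [Nat.one_le_iff_ne_zero.mpr hk]
  · have := hle {k, m}
    rw [sum_pair (Ne.symm hm)] at this
    nlinarith [Nat.one_le_iff_ne_zero.mpr hk]

namespace FusionRingData

variable {ι : Type*} [Fintype ι] [DecidableEq ι] (R : FusionRingData ι)

lemma dual_injective : Function.Injective R.dual :=
  Function.LeftInverse.injective R.dual_dual

lemma N_apply_one (i j : ι) : R.N i j R.one = if i = R.dual j then 1 else 0 := by
  rw [R.frob2, R.one_mul]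

lemma N_dual_apply_one (i j : ι) : R.N (R.dual i) j R.one = if j = i then 1 else 0 := by
  simp only [N_apply_one, R.dual_injective.eq_iff, eq_comm]

lemma N_dual_right (i j k : ι) : R.N i (R.dual j) k = R.N k j i := by
  rw [R.frob2, R.dual_dual]

lemma sum_N_mul_N (X Y X' Y' : ι) :
    ∑ k, R.N X Y k * R.N X' Y' k = ∑ m, R.N (R.dual X') X m * R.N m Y Y' := by
  simp_rw [R.frob1 X' Y']
  exact (R.assoc _ X Y Y').symm

end FusionRingData

namespace BasedSubring

variable {ι : Type*} [Fintype ι] [DecidableEq ι] {R : FusionRingData ι}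

lemma mem_of_N_dual_left_ne_zero (A : BasedSubring R) {X X' m : ι} (hX : X ∈ A.carrier)
    (hX' : X' ∈ A.carrier) (h : R.N (R.dual X') X m ≠ 0) : m ∈ A.carrier :=
  A.mul_mem _ (A.dual_mem _ hX') _ hX _ h

lemma mem_of_N_ne_zero_right (C : BasedSubring R) {Y Y' m : ι} (hY : Y ∈ C.carrier)
    (hY' : Y' ∈ C.carrier) (h : R.N m Y Y' ≠ 0) : m ∈ C.carrier :=
  C.mul_mem _ hY' _ (C.dual_mem _ hY) _ (by rwa [R.N_dual_right])

theorem sum_N_mul_N_eq_ite (A C : BasedSubring R) (hAC : A.carrier ∩ C.carrier = {R.one})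
    {X Y X' Y' : ι} (hX : X ∈ A.carrier) (hY : Y ∈ C.carrier)
    (hX' : X' ∈ A.carrier) (hY' : Y' ∈ C.carrier) :
    ∑ k, R.N X Y k * R.N X' Y' k = if X = X' ∧ Y = Y' then 1 else 0 := by
  rw [R.sum_N_mul_N, sum_eq_single R.one]
  · rw [R.N_dual_apply_one, R.one_mul]
    by_cases hXX : X = X' <;> by_cases hYY : Y = Y' <;> simp [hXX, hYY, eq_comm]
  · intro m _ hm
    by_contra hne
    obtain ⟨hA, hC⟩ := Nat.mul_ne_zero_iff.mp hne
    have hmAC : m ∈ A.carrier ∩ C.carrier :=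
      mem_inter.mpr ⟨A.mem_of_N_dual_left_ne_zero hX hX' hA, C.mem_of_N_ne_zero_right hY hY' hC⟩
    exact hm (by simpa [hAC] using hmAC)
  · exact fun h => absurd (mem_univ _) h

end BasedSubring

theorem product_simple_and_determined_general
    {ι : Type*} [Fintype ι] [DecidableEq ι] (R : FusionRingData ι)
    (A C : BasedSubring R) (hAC : A.carrier ∩ C.carrier = {R.one}) :
    (∀ X ∈ A.carrier, ∀ Y ∈ C.carrier,
        ∃ k : ι, ∀ m : ι, R.N X Y m = if m = k then 1 else 0) ∧
    (∀ X ∈ A.carrier, ∀ Y ∈ C.carrier, ∀ X' ∈ A.carrier, ∀ Y' ∈ C.carrier,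
        ∀ k : ι, R.N X Y k ≠ 0 → R.N X' Y' k ≠ 0 → X = X' ∧ Y = Y') := by
  refine ⟨fun X hX Y hY => ?_, fun X hX Y hY X' hX' Y' hY' k hk hk' => ?_⟩
  · apply exists_eq_ite_of_sum_mul_self_eq_one
    simpa using A.sum_N_mul_N_eq_ite C hAC hX hY hX hY
  · have hpos : ∑ m, R.N X Y m * R.N X' Y' m ≠ 0 := fun h0 =>
      Nat.mul_ne_zero hk hk' (sum_eq_zero_iff.mp h0 k (mem_univ k))
    rw [A.sum_N_mul_N_eq_ite C hAC hX hY hX' hY'] at hpos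
    exact (ite_ne_right_iff.mp hpos).1

/-- If the bases of based subrings `A` and `C` of a fusion ring meet only in the
unit, then for basis elements `X ∈ A`, `Y ∈ C` the product `XY` is again a basis
element, and it determines `X` and `Y`. -/
theorem product_simple_and_determined
    {ι : Type*} [Fintype ι] [DecidableEq ι] (R : FusionRingData ι)
    (d : ι → ℝ) (hd : IsFPdim R d)
    (A C : BasedSubring R) (hAC : A.carrier ∩ C.carrier = {R.one}) :
    (∀ X ∈ A.carrier, ∀ Y ∈ C.carrier,
        ∃ k : ι, ∀ m : ι, R.N X Y m = if m = k then 1 else 0) ∧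
    (∀ X ∈ A.carrier, ∀ Y ∈ C.carrier, ∀ X' ∈ A.carrier, ∀ Y' ∈ C.carrier,
        ∀ k : ι, R.N X Y k ≠ 0 → R.N X' Y' k ≠ 0 → X = X' ∧ Y = Y') :=
  product_simple_and_determined_general R A C hAC
end

section
/- Let R be a fusion ring with basis B and FPdim the Frobenius–Perron character. Let A, C be based subrings with basis sets Irr(A), Irr(C) whose intersection is {1}. If every basis element of R is of the form XY with X ∈ Irr(A), Y ∈ Irr(C), then FPdim(R) = FPdim(A)·FPdim(C), where FPdim of a based (sub)ring is the sum of squares of the FP dimensions of its basis elements. -/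
open Finset

/-- If `Irr(A) ∩ Irr(C) = {1}` and every basis element of `R` is a constituent of
some product `XY` with `X ∈ Irr(A)`, `Y ∈ Irr(C)`, then
`FPdim(R) = FPdim(A) · FPdim(C)`. -/
theorem fpdim_mul_of_factorization
    {ι : Type*} [Fintype ι] [DecidableEq ι] (R : FusionRingData ι)
    (d : ι → ℝ) (hd : IsFPdim R d)
    (A C : BasedSubring R) (hAC : A.carrier ∩ C.carrier = {R.one})
    (hfac : ∀ k : ι, ∃ X ∈ A.carrier, ∃ Y ∈ C.carrier, R.N X Y k ≠ 0) :
    ∑ k : ι, d k ^ 2 = (∑ X ∈ A.carrier, d X ^ 2) * (∑ Y ∈ C.carrier, d Y ^ 2) := by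
  -- key orthogonality lemma
  have hkey : ∀ X ∈ A.carrier, ∀ X' ∈ A.carrier, ∀ Y ∈ C.carrier, ∀ Y' ∈ C.carrier,
      ∑ k : ι, R.N X Y k * R.N X' Y' k = if X = X' ∧ Y = Y' then 1 else 0 := by
    intro X hX X' hX' Y hY Y' hY'
    have step1 : ∑ k : ι, R.N X Y k * R.N X' Y' k
        = ∑ m : ι, R.N (R.dual X') X m * R.N m Y Y' := by
      have h1 : ∀ k, R.N X' Y' k = R.N (R.dual X') k Y' := fun k => R.frob1 X' Y' k
      simp_rw [h1]
      exact (R.assoc (R.dual X') X Y Y').symm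
    rw [step1]
    rw [Finset.sum_eq_single R.one]
    · rw [R.one_mul Y Y']
      have h2 : R.N (R.dual X') X R.one = if R.dual X' = R.dual X then 1 else 0 := by
        rw [R.frob2 (R.dual X') X R.one, R.one_mul]
      rw [h2]
      by_cases hXX : X = X'
      · by_cases hYY : Y = Y' <;> simp [hXX, hYY, eq_comm]
      · have : R.dual X' ≠ R.dual X := fun h => hXX (by
          have := congrArg R.dual h
          rwa [R.dual_dual, R.dual_dual, eq_comm] at this)
        simp [this, hXX]
    · intro m _ hm
      by_contra hne
      have h2 : R.N (R.dual X') X m ≠ 0 := fun h => hne (by simp [h])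
      have h3 : R.N m Y Y' ≠ 0 := fun h => hne (by simp [h])
      have hmA : m ∈ A.carrier := A.mul_mem _ (A.dual_mem X' hX') _ hX m h2
      have hmC : m ∈ C.carrier := by
        have hf : R.N m Y Y' = R.N Y' (R.dual Y) m := R.frob2 m Y Y'
        exact C.mul_mem _ hY' _ (C.dual_mem Y hY) m (hf ▸ h3)
      have : m ∈ A.carrier ∩ C.carrier := Finset.mem_inter.mpr ⟨hmA, hmC⟩
      rw [hAC, Finset.mem_singleton] at this
      exact hm this
    · intro h; exact absurd (Finset.mem_univ R.one) h
  -- squares sum to one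
  have hsq : ∀ X ∈ A.carrier, ∀ Y ∈ C.carrier,
      ∑ k : ι, R.N X Y k * R.N X Y k = 1 := by
    intro X hX Y hY
    simpa using hkey X hX X hX Y hY Y hY
  -- uniqueness of constituent
  have huniq : ∀ X ∈ A.carrier, ∀ Y ∈ C.carrier, ∀ k, R.N X Y k ≠ 0 →
      R.N X Y k = 1 ∧ ∀ k', k' ≠ k → R.N X Y k' = 0 := by
    intro X hX Y hY k hk
    have h1 := hsq X hX Y hY
    have hle : R.N X Y k * R.N X Y k ≤ 1 := by
      rw [← h1]
      exact Finset.single_le_sum (f := fun k' => R.N X Y k' * R.N X Y k')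
        (fun _ _ => Nat.zero_le _) (Finset.mem_univ k)
    have hge : 1 ≤ R.N X Y k * R.N X Y k :=
      Nat.one_le_iff_ne_zero.mpr (Nat.mul_ne_zero hk hk)
    have heq1 : R.N X Y k = 1 := Nat.eq_one_of_mul_eq_one_right (le_antisymm hle hge)
    refine ⟨heq1, ?_⟩
    intro k' hk'
    have hsplit : R.N X Y k * R.N X Y k +
        ∑ x ∈ Finset.univ.erase k, R.N X Y x * R.N X Y x = 1 := by
      rw [Finset.add_sum_erase Finset.univ (fun k' => R.N X Y k' * R.N X Y k')
        (Finset.mem_univ k)]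
      exact h1
    rw [heq1] at hsplit
    have hzero : ∑ k'' ∈ Finset.univ.erase k, R.N X Y k'' * R.N X Y k'' = 0 := by
      omega
    have := (Finset.sum_eq_zero_iff.mp hzero) k'
      (Finset.mem_erase.mpr ⟨hk', Finset.mem_univ k'⟩)
    exact (Nat.mul_eq_zero.mp this).elim id id
  obtain ⟨X, hXmem, Y, hYmem, hN⟩ : ∃ X : ι → ι, (∀ k, X k ∈ A.carrier) ∧
      ∃ Y : ι → ι, (∀ k, Y k ∈ C.carrier) ∧ ∀ k, R.N (X k) (Y k) k ≠ 0 := by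
    choose X hX Y hY hN using hfac
    exact ⟨X, hX, Y, hY, hN⟩
  have hRHS : (∑ X ∈ A.carrier, d X ^ 2) * (∑ Y ∈ C.carrier, d Y ^ 2)
      = ∑ p ∈ A.carrier ×ˢ C.carrier, d p.1 ^ 2 * d p.2 ^ 2 := by
    rw [Finset.sum_mul_sum, Finset.sum_product]
  rw [hRHS]
  refine Finset.sum_bij (fun k _ => (X k, Y k)) ?_ ?_ ?_ ?_
  · intro k _
    exact Finset.mem_product.mpr ⟨hXmem k, hYmem k⟩
  · intro a _ b _ hab
    have h1 := (huniq (X a) (hXmem a) (Y a) (hYmem a) a (hN a)).2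
    have hXab : X a = X b := congrArg Prod.fst hab
    have hYab : Y a = Y b := congrArg Prod.snd hab
    by_contra hne
    have := h1 b (fun h => hne h.symm)
    rw [hXab, hYab] at this
    exact hN b this
  · intro p hp
    obtain ⟨hp1, hp2⟩ := Finset.mem_product.mp hp
    have h1 := hsq p.1 hp1 p.2 hp2
    have : ∃ k, R.N p.1 p.2 k ≠ 0 := by
      by_contra hc
      push_neg at hc
      simp [hc] at h1
    obtain ⟨k, hk⟩ := this
    refine ⟨k, Finset.mem_univ k, ?_⟩
    have hcross := hkey p.1 hp1 (X k) (hXmem k) p.2 hp2 (Y k) (hYmem k)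
    by_cases hif : p.1 = X k ∧ p.2 = Y k
    · exact (Prod.ext hif.1.symm hif.2.symm)
    · rw [if_neg hif] at hcross
      have := (Finset.sum_eq_zero_iff.mp hcross) k (Finset.mem_univ k)
      exact absurd this (Nat.mul_ne_zero hk (hN k))
  · intro k _
    have hval : d k = d (X k) * d (Y k) := by
      have h2 := (hd.2 (X k) (Y k)).symm
      have hu := huniq (X k) (hXmem k) (Y k) (hYmem k) k (hN k)
      rw [Finset.sum_eq_single k] at h2
      · rw [← h2, hu.1]; simp
      · intro k' _ hk'
        rw [hu.2 k' hk']; simp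
      · intro h; exact absurd (Finset.mem_univ k) h
    rw [hval]; ring
end

section
/- Let R be a fusion ring, A, C based subrings with R_A = Σ_{X ∈ Irr(A)} FPdim(X)·X and R_C = Σ_{Y ∈ Irr(C)} FPdim(Y)·Y (elements of R ⊗ ℝ). Then the coefficient of the unit basis element 1 in the product R_A·R_C equals FPdim(D) := Σ_{Z ∈ Irr(A)∩Irr(C)} FPdim(Z)², the FP dimension of the based subring D = A ∩ C. -/
open Finset

/-- FPdim is invariant under duality. -/
lemma fpdim_dual {ι : Type*} [Fintype ι] [DecidableEq ι]
    (R : FusionRingData ι) (d : ι → ℝ) (hd : IsFPdim R d) (i : ι) :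
    d (R.dual i) = d i := by
  have hne : Nonempty ι := ⟨R.one⟩
  have hpos : 0 < ∑ j : ι, d j * d j := by
    apply Finset.sum_pos
    · intro j _
      exact mul_pos (hd.1 j) (hd.1 j)
    · exact Finset.univ_nonempty
  have key : d i * ∑ j : ι, d j * d j = d (R.dual i) * ∑ j : ι, d j * d j := by
    have h1 : ∑ j : ι, ∑ k : ι, (R.N i j k : ℝ) * d k * d j
        = d i * ∑ j : ι, d j * d j := by
      rw [Finset.mul_sum]
      refine Finset.sum_congr rfl fun j _ => ?_
      rw [← Finset.sum_mul, ← hd.2 i j]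
      ring
    have h2 : ∑ j : ι, ∑ k : ι, (R.N i j k : ℝ) * d k * d j
        = d (R.dual i) * ∑ j : ι, d j * d j := by
      rw [Finset.sum_comm, Finset.mul_sum]
      refine Finset.sum_congr rfl fun k _ => ?_
      have : ∑ j : ι, (R.N i j k : ℝ) * d k * d j
          = (∑ j : ι, (R.N (R.dual i) k j : ℝ) * d j) * d k := by
        rw [Finset.sum_mul]
        refine Finset.sum_congr rfl fun j _ => ?_
        rw [← R.frob1]
        ring
      rw [this, ← hd.2 (R.dual i) k]
      ring
    rw [← h1, h2]
  exact (mul_right_cancel₀ (ne_of_gt hpos) key).symm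

/-- The coefficient of the unit basis element in `R_A · R_C` equals
`FPdim(A ∩ C) = Σ_{Z ∈ Irr(A) ∩ Irr(C)} FPdim(Z)²`. -/
theorem coeff_one_regular_product
    {ι : Type*} [Fintype ι] [DecidableEq ι] (R : FusionRingData ι)
    (d : ι → ℝ) (hd : IsFPdim R d) (A C : BasedSubring R) :
    ∑ i ∈ A.carrier, ∑ j ∈ C.carrier, d i * d j * (R.N i j R.one : ℝ)
      = ∑ z ∈ A.carrier ∩ C.carrier, d z ^ 2 := by
  have hone : ∀ i j, R.N i j R.one = if j = R.dual i then 1 else 0 := by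
    intro i j
    rw [R.frob2, R.one_mul]
    by_cases h : j = R.dual i
    · subst h
      simp [R.dual_dual]
    · have h2 : i ≠ R.dual j := by
        intro hh
        exact h (by rw [hh, R.dual_dual])
      simp [h, h2]
  have step : ∀ i ∈ A.carrier,
      ∑ j ∈ C.carrier, d i * d j * (R.N i j R.one : ℝ)
        = if i ∈ C.carrier then d i ^ 2 else 0 := by
    intro i _
    have : ∑ j ∈ C.carrier, d i * d j * (R.N i j R.one : ℝ)
        = ∑ j ∈ C.carrier, if j = R.dual i then d i * d j else 0 := by
      refine Finset.sum_congr rfl fun j _ => ?_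
      rw [hone]
      by_cases h : j = R.dual i <;> simp [h]
    rw [this, Finset.sum_ite_eq' C.carrier (R.dual i) (fun j => d i * d j)]
    have hmem : R.dual i ∈ C.carrier ↔ i ∈ C.carrier := by
      constructor
      · intro h
        have := C.dual_mem _ h
        rwa [R.dual_dual] at this
      · intro h
        exact C.dual_mem _ h
    by_cases h : i ∈ C.carrier
    · rw [if_pos (hmem.mpr h), if_pos h, fpdim_dual R d hd, sq]
    · rw [if_neg (fun hh => h (hmem.mp hh)), if_neg h]
  rw [Finset.sum_congr rfl step, Finset.sum_ite_mem]
end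

section
/- Suppose R is a commutative fusion ring and A, C are based subrings such that every basis element of R factors uniquely as XY with X ∈ Irr(A), Y ∈ Irr(C). Then R is isomorphic as a based ring to the tensor product A ⊗_ℤ C with basis Irr(A) × Irr(C). -/
open Finset

section Aux

variable {ι : Type*} [Fintype ι] [DecidableEq ι] (R : FusionRingData ι)

/-- (XY)(X'Y') = (XX')(YY') at the level of structure constants. -/
lemma quad_identity (hcomm : ∀ i j k : ι, R.N i j k = R.N j i k)
    (X Y X' Y' l : ι) :
    ∑ m, ∑ n, R.N X Y m * R.N X' Y' n * R.N m n l
      = ∑ m, ∑ n, R.N X X' m * R.N Y Y' n * R.N m n l := by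
  calc ∑ m, ∑ n, R.N X Y m * R.N X' Y' n * R.N m n l
      = ∑ m, R.N X Y m * ∑ n, R.N X' Y' n * R.N m n l := by
        simp only [Finset.mul_sum, mul_assoc]
    _ = ∑ m, R.N X Y m * ∑ k, R.N m X' k * R.N k Y' l := by
        refine Finset.sum_congr rfl fun m _ => ?_
        rw [R.assoc m X' Y' l]
    _ = ∑ k, (∑ m, R.N X Y m * R.N m X' k) * R.N k Y' l := by
        simp only [Finset.mul_sum, Finset.sum_mul]
        rw [Finset.sum_comm]
        simp only [mul_assoc]
    _ = ∑ k, (∑ m, R.N X' Y m * R.N X m k) * R.N k Y' l := by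
        refine Finset.sum_congr rfl fun k _ => ?_
        rw [R.assoc X Y X' k]
        simp only [hcomm Y X']
    _ = ∑ k, (∑ m, R.N X X' m * R.N m Y k) * R.N k Y' l := by
        refine Finset.sum_congr rfl fun k _ => ?_
        rw [R.assoc X X' Y k]
    _ = ∑ m, R.N X X' m * ∑ k, R.N m Y k * R.N k Y' l := by
        simp only [Finset.mul_sum, Finset.sum_mul]
        rw [Finset.sum_comm]
        simp only [mul_assoc]
    _ = ∑ m, R.N X X' m * ∑ n, R.N Y Y' n * R.N m n l := by
        refine Finset.sum_congr rfl fun m _ => ?_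
        rw [R.assoc m Y Y' l]
    _ = ∑ m, ∑ n, R.N X X' m * R.N Y Y' n * R.N m n l := by
        simp only [Finset.mul_sum, mul_assoc]

end Aux

/-- If `R` is commutative and every basis element factors uniquely as `XY` with
`X ∈ Irr(A)`, `Y ∈ Irr(C)`, then `R` is isomorphic as a based ring to `A ⊗_ℤ C`
with basis `Irr(A) × Irr(C)`. -/
theorem based_ring_iso_tensor_of_exact_factorization
    {ι : Type*} [Fintype ι] [DecidableEq ι] (R : FusionRingData ι)
    (d : ι → ℝ) (hd : IsFPdim R d)
    (hcomm : ∀ i j k : ι, R.N i j k = R.N j i k)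
    (A C : BasedSubring R)
    (hufac : ∀ k : ι, ∃! p : ι × ι,
        p.1 ∈ A.carrier ∧ p.2 ∈ C.carrier ∧ R.N p.1 p.2 k ≠ 0) :
    ∃ e : {p : ι × ι // p.1 ∈ A.carrier ∧ p.2 ∈ C.carrier} ≃ ι,
      (∀ p, ∀ m : ι, R.N p.1.1 p.1.2 m = if m = e p then 1 else 0) ∧
      (∀ p q r, R.N (e p) (e q) (e r)
          = R.N p.1.1 q.1.1 r.1.1 * R.N p.1.2 q.1.2 r.1.2) := by
  classical
  -- A ∩ C = {1}
  have hAC : ∀ m, m ∈ A.carrier → m ∈ C.carrier → m = R.one := by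
    intro m hmA hmC
    obtain ⟨p, -, hp⟩ := hufac m
    have h1 : ((m, R.one) : ι × ι) = p :=
      hp _ ⟨hmA, C.one_mem, by simp [R.mul_one]⟩
    have h2 : ((R.one, m) : ι × ι) = p :=
      hp _ ⟨A.one_mem, hmC, by simp [R.one_mul]⟩
    have := h1.trans h2.symm
    exact congrArg Prod.fst this
  -- sum of squares is one
  have key : ∀ X ∈ A.carrier, ∀ Y ∈ C.carrier,
      ∑ m, R.N X Y m * R.N X Y m = 1 := by
    intro X hX Y hY
    have ha := R.assoc X Y (R.dual Y) X
    have l1 : ∀ m : ι, R.N m (R.dual Y) X = R.N X Y m := fun m =>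
      (R.frob2 X Y m).symm
    have r1 : ∀ m : ι, R.N X m X = R.N (R.dual X) X m := fun m =>
      R.frob1 X m X
    simp only [l1, r1] at ha
    rw [ha]
    rw [Finset.sum_eq_single R.one]
    · -- value at one
      have hy1 : R.N Y (R.dual Y) R.one = 1 := by
        rw [R.frob2 Y (R.dual Y) R.one, R.dual_dual, R.one_mul]
        simp
      have hx1 : R.N (R.dual X) X R.one = 1 := by
        rw [R.frob2 (R.dual X) X R.one, R.one_mul]
        simp
      rw [hx1, hy1]
    · intro m _ hm
      by_contra h
      have h1 : R.N Y (R.dual Y) m ≠ 0 := fun h0 => h (by simp [h0])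
      have h2 : R.N (R.dual X) X m ≠ 0 := fun h0 => h (by simp [h0])
      have hmC : m ∈ C.carrier := C.mul_mem Y hY _ (C.dual_mem Y hY) m h1
      have hmA : m ∈ A.carrier := A.mul_mem _ (A.dual_mem X hX) X hX m h2
      exact hm (hAC m hmA hmC)
    · intro h; exact absurd (Finset.mem_univ R.one) h
  -- unique constituent of X·Y, with multiplicity one
  have exu : ∀ X ∈ A.carrier, ∀ Y ∈ C.carrier,
      ∃ m : ι, R.N X Y m = 1 ∧ ∀ m', m' ≠ m → R.N X Y m' = 0 := by
    intro X hX Y hY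
    have hk := key X hX Y hY
    have hne : ∃ m : ι, R.N X Y m ≠ 0 := by
      by_contra h
      push_neg at h
      simp [h] at hk
    obtain ⟨m0, hm0⟩ := hne
    have hle : R.N X Y m0 * R.N X Y m0 ≤ 1 := by
      rw [← hk]
      exact Finset.single_le_sum (f := fun m => R.N X Y m * R.N X Y m)
        (fun i _ => Nat.zero_le _) (Finset.mem_univ m0)
    have hge : 1 ≤ R.N X Y m0 := Nat.one_le_iff_ne_zero.mpr hm0
    have hm1 : R.N X Y m0 = 1 := by nlinarith
    refine ⟨m0, hm1, fun m' hm' => ?_⟩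
    have hrest : ∑ m ∈ Finset.univ.erase m0, R.N X Y m * R.N X Y m = 0 := by
      have h := Finset.add_sum_erase Finset.univ
        (fun m => R.N X Y m * R.N X Y m) (Finset.mem_univ m0)
      simp only [hk, hm1] at h
      omega
    have hz := Finset.sum_eq_zero_iff.mp hrest m'
      (Finset.mem_erase.mpr ⟨hm', Finset.mem_univ m'⟩)
    exact (Nat.mul_eq_zero.mp hz).elim id id
  -- the forward map
  let F : {p : ι × ι // p.1 ∈ A.carrier ∧ p.2 ∈ C.carrier} → ι :=
    fun p => (exu p.1.1 p.2.1 p.1.2 p.2.2).choose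
  have hF1 : ∀ p, R.N p.1.1 p.1.2 (F p) = 1 :=
    fun p => (exu p.1.1 p.2.1 p.1.2 p.2.2).choose_spec.1
  have hF0 : ∀ p m, m ≠ F p → R.N p.1.1 p.1.2 m = 0 :=
    fun p => (exu p.1.1 p.2.1 p.1.2 p.2.2).choose_spec.2
  have hFif : ∀ p m, R.N p.1.1 p.1.2 m = if m = F p then 1 else 0 := by
    intro p m
    by_cases h : m = F p
    · simp [h, hF1 p]
    · simp [h, hF0 p m h]
  -- the inverse map
  let G : ι → {p : ι × ι // p.1 ∈ A.carrier ∧ p.2 ∈ C.carrier} :=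
    fun k => ⟨(hufac k).choose, (hufac k).choose_spec.1.1,
      (hufac k).choose_spec.1.2.1⟩
  have hG : ∀ k, R.N (G k).1.1 (G k).1.2 k ≠ 0 :=
    fun k => (hufac k).choose_spec.1.2.2
  have hGu : ∀ k (p : ι × ι), p.1 ∈ A.carrier → p.2 ∈ C.carrier →
      R.N p.1 p.2 k ≠ 0 → p = (G k).1 :=
    fun k p h1 h2 h3 => (hufac k).choose_spec.2 p ⟨h1, h2, h3⟩
  have hGF : ∀ p, G (F p) = p := by
    intro p
    have := hGu (F p) p.1 p.2.1 p.2.2 (by rw [hF1 p]; exact one_ne_zero)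
    exact Subtype.ext this.symm
  have hFG : ∀ k, F (G k) = k := by
    intro k
    by_contra h
    exact hG k (hF0 (G k) k (fun h' => h h'.symm))
  refine ⟨⟨F, G, hGF, hFG⟩, hFif, ?_⟩
  intro p q r
  -- key: coefficient of F r in the product (F p)(F q)
  have main := quad_identity R hcomm p.1.1 p.1.2 q.1.1 q.1.2 (F r)
  -- LHS collapses to R.N (F p) (F q) (F r)
  have lhs : ∑ m, ∑ n, R.N p.1.1 p.1.2 m * R.N q.1.1 q.1.2 n * R.N m n (F r)
      = R.N (F p) (F q) (F r) := by
    simp only [hFif p, hFif q]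
    simp [Finset.sum_ite_eq', Finset.mul_sum]
  -- RHS collapses to the product of structure constants
  have rhs : ∑ m, ∑ n, R.N p.1.1 q.1.1 m * R.N p.1.2 q.1.2 n * R.N m n (F r)
      = R.N p.1.1 q.1.1 r.1.1 * R.N p.1.2 q.1.2 r.1.2 := by
    have hr : (G (F r)).1 = r.1 := congrArg Subtype.val (hGF r)
    rw [Finset.sum_eq_single r.1.1]
    · rw [Finset.sum_eq_single r.1.2]
      · have : R.N r.1.1 r.1.2 (F r) = 1 := hF1 r
        rw [this, mul_one]
      · intro n _ hn
        by_contra hcon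
        have h1 : R.N p.1.1 q.1.1 r.1.1 ≠ 0 := fun h0 => hcon (by simp [h0])
        have h2 : R.N p.1.2 q.1.2 n ≠ 0 := fun h0 => hcon (by simp [h0])
        have h3 : R.N r.1.1 n (F r) ≠ 0 := fun h0 => hcon (by simp [h0])
        have hmA : r.1.1 ∈ A.carrier := r.2.1
        have hnC : n ∈ C.carrier := C.mul_mem _ p.2.2 _ q.2.2 n h2
        have := hGu (F r) (r.1.1, n) hmA hnC h3
        rw [hr] at this
        exact hn (congrArg Prod.snd this)
      · intro h; exact absurd (Finset.mem_univ r.1.2) h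
    · intro m _ hm
      apply Finset.sum_eq_zero
      intro n _
      by_contra hcon
      have h1 : R.N p.1.1 q.1.1 m ≠ 0 := fun h0 => hcon (by simp [h0])
      have h2 : R.N p.1.2 q.1.2 n ≠ 0 := fun h0 => hcon (by simp [h0])
      have h3 : R.N m n (F r) ≠ 0 := fun h0 => hcon (by simp [h0])
      have hmA : m ∈ A.carrier := A.mul_mem _ p.2.1 _ q.2.1 m h1
      have hnC : n ∈ C.carrier := C.mul_mem _ p.2.2 _ q.2.2 n h2
      have := hGu (F r) (m, n) hmA hnC h3
      rw [hr] at this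
      exact hm (congrArg Prod.fst this)
    · intro h; exact absurd (Finset.mem_univ r.1.1) h
  rw [lhs, rhs] at main
  exact main
end
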